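/- Let n ≥ 3, let p ∈ V with q(p) ≠ 0, and let x₁, y₁ be real parameters. Define the linear map Q_σ on Λ²V* by Q_σ(Y)(b,c) := y₁·C[T_{p,Y}](p,b,c) + (−x₁/2 − y₁)·A[T_{p,Y}](p,b,c), where T_{p,Y}(a,b,c) := g(p,a)·Y(b,c). Then Q_σ is invertible if and only if x₁ ≠ 0 and y₁ ≠ 0. (Q_σ is the principal symbol, at a non-null covector, of the propagation operator Q = y₁·ρ¹∘CYK + (−x₁/2 − y₁)·ρ²∘d of the 5-parameter family of propagation identities; this realizes the hyperbolicity conditions x₁ ≠ 0, y₁ ≠ 0 of that family.) -/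

import Mathlib

noncomputable section

/-- The `g`-trace `μ_T` of a trilinear tensor `T` over its first and third slots,
computed with the inverse metric components `ginv`: `μ_T(c) = Σᵢⱼ g^{ij} T(eᵢ, c, eⱼ)`. -/
def muTr (n : ℕ) (ginv : Matrix (Fin n) (Fin n) ℝ)
    (T : Fin n → Fin n → Fin n → ℝ) (c : Fin n) : ℝ :=
  ∑ i, ∑ j, ginv i j * T i c j

/-- The algebraic conformal Killing–Yano projector:
`C[T](a,b,c) = 2T(a,b,c) − T(b,c,a) + T(c,b,a) + (3/(n−1))(g(a,b)μ_T(c) − g(c,a)μ_T(b))`. -/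
def cykOp (n : ℕ) (g ginv : Matrix (Fin n) (Fin n) ℝ)
    (T : Fin n → Fin n → Fin n → ℝ) : Fin n → Fin n → Fin n → ℝ :=
  fun a b c => 2 * T a b c - T b c a + T c b a
    + (3 / ((n : ℝ) - 1)) * (g a b * muTr n ginv T c - g c a * muTr n ginv T b)

/-- The antisymmetrizer `A[T](a,b,c) = 2(T(a,b,c) + T(b,c,a) + T(c,a,b))`. -/
def asymOp (n : ℕ) (T : Fin n → Fin n → Fin n → ℝ) : Fin n → Fin n → Fin n → ℝ :=
  fun a b c => 2 * (T a b c + T b c a + T c a b)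

/-- Lowering the index of `p` with the metric `g`: `p_a = Σᵢ pⁱ g_{ia}`. -/
def lowerIdx (n : ℕ) (g : Matrix (Fin n) (Fin n) ℝ) (p : Fin n → ℝ) (a : Fin n) : ℝ :=
  ∑ i, p i * g i a

/-- The quadratic form `q(p) = g(p,p)`. -/
def qForm (n : ℕ) (g : Matrix (Fin n) (Fin n) ℝ) (p : Fin n → ℝ) : ℝ :=
  ∑ i, ∑ j, p i * g i j * p j

/-- The symbol map `K_p` on 2-forms:
`(K_p Y)(b,c) = g(p,b)·Y(c,p) − g(p,c)·Y(b,p)` in components. -/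
def Ksymb (n : ℕ) (g : Matrix (Fin n) (Fin n) ℝ) (p : Fin n → ℝ)
    (Y : Matrix (Fin n) (Fin n) ℝ) (b c : Fin n) : ℝ :=
  lowerIdx n g p b * (∑ j, Y c j * p j) - lowerIdx n g p c * (∑ j, Y b j * p j)

/-- The tensor `T_{p,Y}(a,b,c) = g(p,a)·Y(b,c)` in components. -/
def Ttens (n : ℕ) (g : Matrix (Fin n) (Fin n) ℝ) (p : Fin n → ℝ)
    (Y : Matrix (Fin n) (Fin n) ℝ) : Fin n → Fin n → Fin n → ℝ :=
  fun a b c => lowerIdx n g p a * Y b c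

/-- The principal symbol `Q_σ = y₁·(ρ¹∘CYK-symbol) + (−x₁/2 − y₁)·(ρ²∘d-symbol)`
of the propagation operator `Q`, acting on 2-forms. -/
def Qsymb (n : ℕ) (g ginv : Matrix (Fin n) (Fin n) ℝ) (p : Fin n → ℝ)
    (x₁ y₁ : ℝ) (Y : Matrix (Fin n) (Fin n) ℝ) : Matrix (Fin n) (Fin n) ℝ :=
  Matrix.of fun b c =>
    y₁ * (∑ a, p a * cykOp n g ginv (Ttens n g p Y) a b c)
      + (-x₁/2 - y₁) * (∑ a, p a * asymOp n (Ttens n g p Y) a b c)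

/- ### Auxiliary lemmas -/

lemma muTr_Ttens (n : ℕ) (g ginv : Matrix (Fin n) (Fin n) ℝ)
    (hinv : g * ginv = 1) (p : Fin n → ℝ) (Y : Matrix (Fin n) (Fin n) ℝ) (c : Fin n) :
    muTr n ginv (Ttens n g p Y) c = ∑ j, Y c j * p j := by
  unfold muTr Ttens lowerIdx
  rw [Finset.sum_comm]
  refine Finset.sum_congr rfl fun j _ => ?_
  have key : (∑ i, ginv i j * (∑ k, p k * g k i)) = p j := by
    have h1 : ∀ i, ginv i j * (∑ k, p k * g k i) = ∑ k, p k * g k i * ginv i j := by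
      intro i; rw [Finset.mul_sum]; refine Finset.sum_congr rfl fun k _ => by ring
    simp_rw [h1]
    rw [Finset.sum_comm]
    have h2 : ∀ k, (∑ i, p k * g k i * ginv i j) = p k * (g * ginv) k j := by
      intro k; rw [Matrix.mul_apply, Finset.mul_sum]
      refine Finset.sum_congr rfl fun i _ => by ring
    simp_rw [h2, hinv, Matrix.one_apply]
    simp
  calc (∑ i, ginv i j * ((∑ k, p k * g k i) * Y c j))
      = (∑ i, ginv i j * (∑ k, p k * g k i)) * Y c j := by
        rw [Finset.sum_mul]; exact Finset.sum_congr rfl fun i _ => by ring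
    _ = Y c j * p j := by rw [key]; ring

lemma sum_p_lower (n : ℕ) (g : Matrix (Fin n) (Fin n) ℝ) (p : Fin n → ℝ) :
    ∑ a, p a * lowerIdx n g p a = qForm n g p := by
  unfold lowerIdx qForm
  simp_rw [Finset.mul_sum]
  rw [Finset.sum_comm]
  exact Finset.sum_congr rfl fun i _ => Finset.sum_congr rfl fun a _ => by ring

lemma qsymb_eq (n : ℕ) (hn : 3 ≤ n) (g ginv : Matrix (Fin n) (Fin n) ℝ)
    (hsymm : ∀ i j, g i j = g j i) (hinv : g * ginv = 1)
    (p : Fin n → ℝ) (x₁ y₁ : ℝ) (Y : Matrix (Fin n) (Fin n) ℝ)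
    (hY : ∀ b c, Y b c = -(Y c b)) (b c : Fin n) :
    Qsymb n g ginv p x₁ y₁ Y b c
      = (-x₁ * qForm n g p) * Y b c
        + (3 * y₁ / ((n : ℝ) - 1) - 3 * y₁ - x₁) * Ksymb n g p Y b c := by
  have hn1 : ((n : ℝ) - 1) ≠ 0 := by
    have : (3 : ℝ) ≤ (n : ℝ) := by exact_mod_cast hn
    linarith
  set q := qForm n g p with hqdef
  set pt := lowerIdx n g p with hptdef
  set Z : Fin n → ℝ := fun c => ∑ j, Y c j * p j with hZdef
  have hZ : ∀ d, ∑ a, p a * Y d a = Z d := by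
    intro d; exact Finset.sum_congr rfl fun a _ => by ring
  have hZ' : ∀ d, ∑ a, p a * Y a d = -Z d := by
    intro d
    rw [← Finset.sum_neg_distrib]
    refine Finset.sum_congr rfl fun a _ => ?_
    rw [hY a d]; ring
  have hg1 : ∀ d, ∑ a, p a * g a d = pt d := by
    intro d; rfl
  have hg2 : ∀ d, ∑ a, p a * g d a = pt d := by
    intro d; rw [← hg1 d]; exact Finset.sum_congr rfl fun a _ => by rw [hsymm]
  have hB : ∑ a, p a * pt a = q := sum_p_lower n g p
  have hS1 : ∑ a, p a * cykOp n g ginv (Ttens n g p Y) a b c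
      = 2 * q * Y b c - pt b * Z c + pt c * Z b
        + (3 / ((n : ℝ) - 1)) * (pt b * Z c - pt c * Z b) := by
    have expand : ∀ a, p a * cykOp n g ginv (Ttens n g p Y) a b c
        = (p a * pt a) * (2 * Y b c) + (p a * Y c a) * (-(pt b)) + (p a * Y b a) * pt c
          + (p a * g a b) * ((3 / ((n : ℝ) - 1)) * Z c)
          + (p a * g c a) * (-((3 / ((n : ℝ) - 1)) * Z b)) := by
      intro a
      simp only [cykOp, Ttens, muTr_Ttens n g ginv hinv p Y, ← hZdef, ← hptdef]
      ring
    rw [Finset.sum_congr rfl fun a _ => expand a]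
    simp only [Finset.sum_add_distrib, ← Finset.sum_mul]
    rw [hB, hZ, hZ, hg1, hg2]
    ring
  have hS2 : ∑ a, p a * asymOp n (Ttens n g p Y) a b c
      = 2 * (q * Y b c + pt b * Z c - pt c * Z b) := by
    have expand : ∀ a, p a * asymOp n (Ttens n g p Y) a b c
        = (p a * pt a) * (2 * Y b c) + (p a * Y c a) * (2 * pt b)
          + (p a * Y a b) * (2 * pt c) := by
      intro a
      simp only [asymOp, Ttens, ← hptdef]
      ring
    rw [Finset.sum_congr rfl fun a _ => expand a]
    simp only [Finset.sum_add_distrib, ← Finset.sum_mul]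
    rw [hB, hZ, hZ']
    ring
  show y₁ * _ + (-x₁/2 - y₁) * _ = _
  rw [hS1, hS2]
  have hK : Ksymb n g p Y b c = pt b * Z c - pt c * Z b := rfl
  rw [hK]
  field_simp
  ring

lemma Ksymb_antisym (n : ℕ) (g : Matrix (Fin n) (Fin n) ℝ) (p : Fin n → ℝ)
    (Y : Matrix (Fin n) (Fin n) ℝ) (b c : Fin n) :
    Ksymb n g p Y b c = -(Ksymb n g p Y c b) := by
  unfold Ksymb; ring

lemma Ksymb_lin (n : ℕ) (g : Matrix (Fin n) (Fin n) ℝ) (p : Fin n → ℝ)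
    (Y₁ Y₂ : Matrix (Fin n) (Fin n) ℝ) (α β : ℝ) (b c : Fin n) :
    Ksymb n g p (Matrix.of fun b c => α * Y₁ b c + β * Y₂ b c) b c
      = α * Ksymb n g p Y₁ b c + β * Ksymb n g p Y₂ b c := by
  unfold Ksymb
  simp only [Matrix.of_apply, add_mul, Finset.sum_add_distrib, mul_assoc, ← Finset.mul_sum]
  ring

lemma sum_anti_zero (n : ℕ) (p : Fin n → ℝ) (Y : Matrix (Fin n) (Fin n) ℝ)
    (hY : ∀ b c, Y b c = -(Y c b)) :
    ∑ j, (∑ k, Y j k * p k) * p j = 0 := by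
  have h : ∑ j, (∑ k, Y j k * p k) * p j = ∑ j, ∑ k, Y j k * p k * p j := by
    refine Finset.sum_congr rfl fun j _ => Finset.sum_mul ..
  rw [h]
  have h2 : ∑ j, ∑ k, Y j k * p k * p j = -∑ j, ∑ k, Y j k * p k * p j := by
    conv_lhs => rw [Finset.sum_comm]
    rw [← Finset.sum_neg_distrib]
    refine Finset.sum_congr rfl fun k _ => ?_
    rw [← Finset.sum_neg_distrib]
    refine Finset.sum_congr rfl fun j _ => ?_
    rw [hY j k]; ring
  linarith

lemma Ksymb_sq (n : ℕ) (g : Matrix (Fin n) (Fin n) ℝ) (p : Fin n → ℝ)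
    (Y : Matrix (Fin n) (Fin n) ℝ) (hY : ∀ b c, Y b c = -(Y c b)) (b c : Fin n) :
    Ksymb n g p (Matrix.of (Ksymb n g p Y)) b c = -(qForm n g p) * Ksymb n g p Y b c := by
  have hW : ∀ d : Fin n, ∑ j, Ksymb n g p Y d j * p j
      = -(qForm n g p) * (∑ j, Y d j * p j) := by
    intro d
    have expand : ∀ j, Ksymb n g p Y d j * p j
        = lowerIdx n g p d * ((∑ k, Y j k * p k) * p j)
          - (p j * lowerIdx n g p j) * (∑ k, Y d k * p k) := by
      intro j; unfold Ksymb; ring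
    rw [Finset.sum_congr rfl fun j _ => expand j]
    rw [Finset.sum_sub_distrib, ← Finset.mul_sum, sum_anti_zero n p Y hY, ← Finset.sum_mul,
      sum_p_lower]
    ring
  show lowerIdx n g p b * (∑ j, Ksymb n g p Y c j * p j)
      - lowerIdx n g p c * (∑ j, Ksymb n g p Y b j * p j) = _
  rw [hW, hW]
  unfold Ksymb
  ring

lemma exists_uv (n : ℕ) (hn : 3 ≤ n) (p : Fin n → ℝ) :
    ∃ u v : Fin n → ℝ, (∑ j, u j * p j) = 0 ∧ (∑ j, v j * p j) = 0 ∧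
      ∃ b c, u b * v c ≠ v b * u c := by
  let f : (Fin n → ℝ) →ₗ[ℝ] ℝ :=
    { toFun := fun w => ∑ j, w j * p j
      map_add' := by
        intro w₁ w₂
        simp only [Pi.add_apply, add_mul, Finset.sum_add_distrib]
      map_smul' := by
        intro r w
        simp only [Pi.smul_apply, smul_eq_mul, RingHom.id_apply, Finset.mul_sum]
        exact Finset.sum_congr rfl fun j _ => by ring }
  have hrank : 2 ≤ Module.finrank ℝ (LinearMap.ker f) := by
    have h1 := LinearMap.finrank_range_add_finrank_ker f
    have h2 : Module.finrank ℝ (LinearMap.range f) ≤ 1 := by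
      simpa using (LinearMap.range f).finrank_le
    rw [Module.finrank_fin_fun ℝ] at h1
    omega
  set d := Module.finrank ℝ (LinearMap.ker f) with hd
  let B : Module.Basis (Fin d) ℝ (LinearMap.ker f) := Module.finBasis ℝ _
  let i0 : Fin d := ⟨0, by omega⟩
  let i1 : Fin d := ⟨1, by omega⟩
  have hne : i0 ≠ i1 := by simp [i0, i1, Fin.ext_iff]
  set u : Fin n → ℝ := (B i0 : Fin n → ℝ) with hu
  set v : Fin n → ℝ := (B i1 : Fin n → ℝ) with hv
  have hpair : ∀ s t : ℝ, s • u + t • v = 0 → s = 0 ∧ t = 0 := by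
    intro s t hst
    have hsub : s • B i0 + t • B i1 = 0 := by
      apply Subtype.ext
      simpa using hst
    have hli := B.linearIndependent
    rw [linearIndependent_iff'] at hli
    have := hli {i0, i1} (fun i => if i = i0 then s else if i = i1 then t else 0) ?_
    · constructor
      · simpa using this i0 (by simp)
      · have := this i1 (by simp)
        simpa [hne.symm] using this
    · rw [Finset.sum_pair hne]
      simpa [hne, hne.symm] using hsub
  have hu0 : f u = 0 := (B i0).2
  have hv0 : f v = 0 := (B i1).2
  refine ⟨u, v, hu0, hv0, ?_⟩
  by_contra hprop
  push_neg at hprop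
  have hune : u ≠ 0 := by
    intro h0
    have := hpair 1 0 (by simp [h0])
    exact one_ne_zero this.1
  obtain ⟨b, hb⟩ : ∃ b, u b ≠ 0 := by
    by_contra h; push_neg at h; exact hune (funext h)
  have : (v b / u b) • u + (-1 : ℝ) • v = 0 := by
    funext c
    simp only [Pi.add_apply, Pi.smul_apply, smul_eq_mul, Pi.zero_apply]
    field_simp
    linarith [hprop b c]
  have := hpair _ _ this
  norm_num at this

/-- At a non-null covector `p`, the symbol `Q_σ` is invertible on the space of
2-forms (alternating matrices) if and only if `x₁ ≠ 0` and `y₁ ≠ 0`. -/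
theorem Qsymb_bijective_iff (n : ℕ) (hn : 3 ≤ n)
    (g ginv : Matrix (Fin n) (Fin n) ℝ)
    (hsymm : ∀ i j, g i j = g j i)
    (hinv : g * ginv = 1) (hinv' : ginv * g = 1)
    (p : Fin n → ℝ) (hq : qForm n g p ≠ 0) (x₁ y₁ : ℝ) :
    Set.BijOn (Qsymb n g ginv p x₁ y₁)
        {Y : Matrix (Fin n) (Fin n) ℝ | ∀ b c, Y b c = -(Y c b)}
        {Y : Matrix (Fin n) (Fin n) ℝ | ∀ b c, Y b c = -(Y c b)} ↔
      (x₁ ≠ 0 ∧ y₁ ≠ 0) := by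
  have hn1 : ((n : ℝ) - 1) ≠ 0 := by
    have : (3 : ℝ) ≤ (n : ℝ) := by exact_mod_cast hn
    linarith
  have hn2 : ((n : ℝ) - 2) ≠ 0 := by
    have : (3 : ℝ) ≤ (n : ℝ) := by exact_mod_cast hn
    linarith
  set S : Set (Matrix (Fin n) (Fin n) ℝ) :=
    {Y : Matrix (Fin n) (Fin n) ℝ | ∀ b c, Y b c = -(Y c b)} with hS
  set q := qForm n g p with hqdef
  set c₁ : ℝ := -x₁ * q with hc₁def
  set c₂ : ℝ := 3 * y₁ / ((n : ℝ) - 1) - 3 * y₁ - x₁ with hc₂def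
  have hmain := qsymb_eq n hn g ginv hsymm hinv p x₁ y₁
  constructor
  · -- bijective → x₁ ≠ 0 ∧ y₁ ≠ 0
    intro hbij
    have h0S : (0 : Matrix (Fin n) (Fin n) ℝ) ∈ S := by
      intro b c; simp
    have hQ0 : Qsymb n g ginv p x₁ y₁ 0 = 0 := by
      funext b c
      rw [hmain 0 (by intro b c; simp) b c]
      simp [Ksymb]
    obtain ⟨u, v, hu0, hv0, b₀, c₀, hbc⟩ := exists_uv n hn p
    constructor
    · -- x₁ ≠ 0
      intro hx
      set Y₀ : Matrix (Fin n) (Fin n) ℝ := Matrix.of fun b c => u b * v c - v b * u c with hY₀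
      have hY₀S : Y₀ ∈ S := by intro b c; simp only [hY₀, Matrix.of_apply]; ring
      have hKY₀ : ∀ b c, Ksymb n g p Y₀ b c = 0 := by
        intro b c
        have hZ : ∀ d, ∑ j, Y₀ d j * p j = 0 := by
          intro d
          have : ∀ j, Y₀ d j * p j = u d * (v j * p j) - v d * (u j * p j) := by
            intro j; simp only [hY₀, Matrix.of_apply]; ring
          rw [Finset.sum_congr rfl fun j _ => this j, Finset.sum_sub_distrib,
            ← Finset.mul_sum, ← Finset.mul_sum, hu0, hv0]
          ring
        unfold Ksymb
        rw [hZ, hZ]; ring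
      have hQY₀ : Qsymb n g ginv p x₁ y₁ Y₀ = 0 := by
        funext b c
        rw [hmain Y₀ hY₀S b c, hKY₀]
        simp [hx]
      have := hbij.injOn hY₀S h0S (by rw [hQY₀, hQ0])
      have h00 := congrFun (congrFun this b₀) c₀
      simp only [hY₀, Matrix.of_apply, Matrix.zero_apply] at h00
      exact hbc (by linarith)
    · -- y₁ ≠ 0
      intro hy
      have hune : u ≠ 0 := by
        intro h0
        apply hbc
        simp [h0]
      set pt := lowerIdx n g p with hptdef
      set Y₁ : Matrix (Fin n) (Fin n) ℝ := Matrix.of fun b c => pt b * u c - u b * pt c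
        with hY₁
      have hY₁S : Y₁ ∈ S := by intro b c; simp only [hY₁, Matrix.of_apply]; ring
      have hptp : ∑ j, pt j * p j = q := by
        rw [hqdef, ← sum_p_lower n g p]
        exact Finset.sum_congr rfl fun j _ => by ring
      have hZ : ∀ d, ∑ j, Y₁ d j * p j = -q * u d := by
        intro d
        have : ∀ j, Y₁ d j * p j = pt d * (u j * p j) - u d * (pt j * p j) := by
          intro j; simp only [hY₁, Matrix.of_apply]; ring
        rw [Finset.sum_congr rfl fun j _ => this j, Finset.sum_sub_distrib,
          ← Finset.mul_sum, ← Finset.mul_sum, hu0, hptp]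
        ring
      have hKY₁ : ∀ b c, Ksymb n g p Y₁ b c = -q * Y₁ b c := by
        intro b c
        show pt b * (∑ j, Y₁ c j * p j) - pt c * (∑ j, Y₁ b j * p j) = _
        rw [hZ, hZ]
        simp only [hY₁, Matrix.of_apply]
        ring
      have hQY₁ : Qsymb n g ginv p x₁ y₁ Y₁ = 0 := by
        funext b c
        rw [hmain Y₁ hY₁S b c, hKY₁, ← hqdef, hy]
        simp only [Matrix.zero_apply]
        ring
      have hYeq := hbij.injOn hY₁S h0S (by rw [hQY₁, hQ0])
      -- Y₁ = 0 forces u = 0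
      apply hune
      funext d
      have key : ∀ b c, pt b * u c = u b * pt c := by
        intro b c
        have := congrFun (congrFun hYeq b) c
        simp only [hY₁, Matrix.of_apply, Matrix.zero_apply] at this
        linarith
      have hsum : ∑ b, p b * (pt b * u d) = ∑ b, p b * (u b * pt d) := by
        exact Finset.sum_congr rfl fun b _ => by rw [key]
      have hL : ∑ b, p b * (pt b * u d) = q * u d := by
        rw [show (fun b => p b * (pt b * u d)) = fun b => (p b * pt b) * u d from
          funext fun b => by ring]
        rw [← Finset.sum_mul, sum_p_lower]
      have hR : ∑ b, p b * (u b * pt d) = 0 := by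
        rw [show (fun b => p b * (u b * pt d)) = fun b => (u b * p b) * pt d from
          funext fun b => by ring]
        rw [← Finset.sum_mul, hu0, zero_mul]
      rw [hL, hR] at hsum
      have := mul_eq_zero.mp hsum
      simpa [hq, ← hqdef] using this
  · -- x₁ ≠ 0 ∧ y₁ ≠ 0 → bijective
    rintro ⟨hx, hy⟩
    have hc₁ : c₁ ≠ 0 := by
      simp only [hc₁def]
      exact mul_ne_zero (neg_ne_zero.mpr hx) hq
    have hden : c₁ - q * c₂ ≠ 0 := by
      have : c₁ - q * c₂ = 3 * q * y₁ * ((n : ℝ) - 2) / ((n : ℝ) - 1) := by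
        simp only [hc₁def, hc₂def]
        field_simp
        ring
      rw [this]
      exact div_ne_zero (mul_ne_zero (mul_ne_zero (mul_ne_zero three_ne_zero hq) hy) hn2) hn1
    set a : ℝ := 1 / c₁ with hadef
    set b' : ℝ := -c₂ / (c₁ * (c₁ - q * c₂)) with hbdef
    set R : Matrix (Fin n) (Fin n) ℝ → Matrix (Fin n) (Fin n) ℝ :=
      fun Y => Matrix.of fun b c => a * Y b c + b' * (Matrix.of (Ksymb n g p Y)) b c with hR
    have hQmat : ∀ Y ∈ S, Qsymb n g ginv p x₁ y₁ Y
        = Matrix.of fun b c => c₁ * Y b c + c₂ * (Matrix.of (Ksymb n g p Y)) b c := by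
      intro Y hY
      funext b c
      rw [hmain Y hY b c]
      simp only [Matrix.of_apply, hc₁def, hc₂def, hqdef]
    have hmapsQ : Set.MapsTo (Qsymb n g ginv p x₁ y₁) S S := by
      intro Y hY b c
      rw [hmain Y hY b c, hmain Y hY c b, hY b c, Ksymb_antisym]
      ring
    have hmapsR : Set.MapsTo R S S := by
      intro Y hY b c
      simp only [hR, Matrix.of_apply]
      rw [hY b c, Ksymb_antisym]
      ring
    have hRS : ∀ Y ∈ S, (Matrix.of (Ksymb n g p Y)) ∈ S := by
      intro Y hY b c
      simp only [Matrix.of_apply]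
      exact Ksymb_antisym n g p Y b c
    have hleft : ∀ Y ∈ S, R (Qsymb n g ginv p x₁ y₁ Y) = Y := by
      intro Y hY
      funext b c
      have e1 : R (Qsymb n g ginv p x₁ y₁ Y) b c
          = a * (Qsymb n g ginv p x₁ y₁ Y) b c
            + b' * Ksymb n g p (Qsymb n g ginv p x₁ y₁ Y) b c := rfl
      have e2 : (Qsymb n g ginv p x₁ y₁ Y) b c
          = c₁ * Y b c + c₂ * Ksymb n g p Y b c := by
        rw [hmain Y hY b c, ← hqdef]
      have e3 : Ksymb n g p (Qsymb n g ginv p x₁ y₁ Y) b c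
          = c₁ * Ksymb n g p Y b c + c₂ * Ksymb n g p (Matrix.of (Ksymb n g p Y)) b c := by
        rw [hQmat Y hY]
        exact Ksymb_lin n g p Y (Matrix.of (Ksymb n g p Y)) c₁ c₂ b c
      have e4 : Ksymb n g p (Matrix.of (Ksymb n g p Y)) b c
          = -q * Ksymb n g p Y b c := by
        rw [Ksymb_sq n g p Y hY b c, ← hqdef]
      rw [e1, e2, e3, e4, hadef, hbdef]
      have hden' : c₁ - c₂ * q ≠ 0 := by rwa [mul_comm c₂ q]
      field_simp
      ring
    have hright : ∀ Y ∈ S, Qsymb n g ginv p x₁ y₁ (R Y) = Y := by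
      intro Y hY
      funext b c
      have e1 : Qsymb n g ginv p x₁ y₁ (R Y) b c
          = c₁ * (R Y) b c + c₂ * Ksymb n g p (R Y) b c := by
        rw [hmain (R Y) (hmapsR hY) b c, ← hqdef]
      have e2 : (R Y) b c = a * Y b c + b' * Ksymb n g p Y b c := rfl
      have e3 : Ksymb n g p (R Y) b c
          = a * Ksymb n g p Y b c + b' * Ksymb n g p (Matrix.of (Ksymb n g p Y)) b c :=
        Ksymb_lin n g p Y (Matrix.of (Ksymb n g p Y)) a b' b c
      have e4 : Ksymb n g p (Matrix.of (Ksymb n g p Y)) b c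
          = -q * Ksymb n g p Y b c := by
        rw [Ksymb_sq n g p Y hY b c, ← hqdef]
      rw [e1, e2, e3, e4, hadef, hbdef]
      have hden' : c₁ - c₂ * q ≠ 0 := by rwa [mul_comm c₂ q]
      field_simp
      ring
    exact Set.InvOn.bijOn ⟨hleft, hright⟩ hmapsQ hmapsR
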